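/- Let Φ = (G, 𝕋, φ) be a complex unit gain graph and let G₁ be an induced subgraph of G with μ(G) = μ(G₁) + μ(G − G₁), where G − G₁ is the subgraph induced by the vertices outside G₁. If 𝓔(Φ) = 2μ(G), then the restricted gain graph (G₁, 𝕋, φ) satisfies 𝓔(G₁, 𝕋, φ) = 2μ(G₁). -/

import Mathlib

open Matrix

variable {V : Type*}

/-- A gain function on `G` with values in the circle group `𝕋 ⊆ ℂ`:
each ordered pair of adjacent vertices gets a unit complex number, and
reversing the pair inverts the gain. -/
structure IsGain (G : SimpleGraph V) (φ : V → V → ℂ) : Prop where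
  unit : ∀ u v, G.Adj u v → ‖φ u v‖ = 1
  inv : ∀ u v, G.Adj u v → φ v u = (φ u v)⁻¹

/-- The adjacency matrix of the complex unit gain graph `(G, 𝕋, φ)`. -/
noncomputable def gainAdj (G : SimpleGraph V) (φ : V → V → ℂ) : Matrix V V ℂ :=
  fun u v => @ite _ (G.Adj u v) (Classical.dec _) (φ u v) 0

theorem IsGain.isHermitian {G : SimpleGraph V} {φ : V → V → ℂ} (hg : IsGain G φ) :
    (gainAdj G φ).IsHermitian := by
  ext u v
  simp only [conjTranspose_apply, gainAdj]
  by_cases h : G.Adj u v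
  · rw [if_pos h.symm, if_pos h, hg.inv u v h, Complex.inv_eq_conj (hg.unit u v h)]
    simp
  · rw [if_neg (fun h' => h h'.symm), if_neg h]
    simp

/-- The energy of a complex unit gain graph: the sum of the absolute values of the
eigenvalues of its (Hermitian) adjacency matrix. -/
noncomputable def gainEnergy [Fintype V] [DecidableEq V] (G : SimpleGraph V) (φ : V → V → ℂ)
    (hg : IsGain G φ) : ℝ :=
  ∑ i, |hg.isHermitian.eigenvalues i|

/-- `M` is a matching of `G`: a set of edges of `G`, pairwise sharing no vertex. -/
def IsGraphMatching (G : SimpleGraph V) (M : Finset (Sym2 V)) : Prop :=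
  (↑M : Set (Sym2 V)) ⊆ G.edgeSet ∧
    ∀ e ∈ M, ∀ f ∈ M, e ≠ f → ∀ v : V, v ∈ e → v ∉ f

/-- The matching number of `G`: the largest size of a matching. -/
noncomputable def matchingNumber (G : SimpleGraph V) : ℕ :=
  sSup {n | ∃ M : Finset (Sym2 V), IsGraphMatching G M ∧ M.card = n}

/-- The gain of a walk: the product of the gains along its darts. -/
def walkGain {G : SimpleGraph V} (φ : V → V → ℂ) {u v : V} (w : G.Walk u v) : ℂ :=
  (w.darts.map fun d => φ d.toProd.1 d.toProd.2).prod

/-- A complex unit gain graph is balanced if every cycle has gain `1`. -/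
def IsBalanced (G : SimpleGraph V) (φ : V → V → ℂ) : Prop :=
  ∀ (v : V) (w : G.Walk v v), w.IsCycle → walkGain φ w = 1

theorem IsGain.anti {G H : SimpleGraph V} {φ : V → V → ℂ} (hg : IsGain G φ) (hle : H ≤ G) :
    IsGain H φ :=
  ⟨fun u v h => hg.unit u v (hle h), fun u v h => hg.inv u v (hle h)⟩

theorem IsGain.induce {G : SimpleGraph V} {φ : V → V → ℂ} (hg : IsGain G φ) (s : Set V) :
    IsGain (G.induce s) (fun a b => φ a b) :=
  ⟨fun u v h => hg.unit u v h, fun u v h => hg.inv u v h⟩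

/-!
Write `E(A)` for the sum of the absolute values of the eigenvalues of a Hermitian matrix `A`.
Diagonalising `A`, one sees `‖tr (A S)‖ ≤ E(A)` for every `S` of numerical radius at most one,
with equality for `S = sign A`. Two choices of `S` give the theorem. For the block-diagonal
`S = sign A₁ ⊕ sign A₂` built from the diagonal blocks of `A` along `U` and its complement,
this is the pinching inequality `E(A₁) + E(A₂) ≤ E(A)`. For `S` the part of the gain matrix
supported on a maximum matching `M`, unit gains give `tr (A S) = 2 |M|`, so `2 μ ≤ E` for every
gain graph. Hence `2μ(G₁) + 2μ(G - G₁) ≤ E(G₁) + E(G - G₁) ≤ E(G) = 2μ(G₁) + 2μ(G - G₁)`, and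
both inequalities are equalities.
-/

open Finset

namespace Matrix

variable {ι m n : Type*} [Fintype ι] [Fintype m] [Fintype n]

theorem star_dotProduct_self_eq_sum_norm_sq (x : n → ℂ) :
    star x ⬝ᵥ x = ((∑ i, ‖x i‖ ^ 2 : ℝ) : ℂ) := by
  simp [dotProduct, Complex.conj_mul']

def NumericalRadiusLeOne (S : Matrix n n ℂ) : Prop :=
  ∀ x : n → ℂ, ‖star x ⬝ᵥ S *ᵥ x‖ ≤ ∑ i, ‖x i‖ ^ 2

theorem numericalRadiusLeOne_of_sum_norm_le_one {S : Matrix n n ℂ}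
    (hrow : ∀ i, ∑ j, ‖S i j‖ ≤ 1) (hcol : ∀ j, ∑ i, ‖S i j‖ ≤ 1) :
    NumericalRadiusLeOne S := by
  intro x
  have hrow' : ∑ i, ∑ j, ‖S i j‖ * ‖x i‖ ^ 2 ≤ ∑ i, ‖x i‖ ^ 2 :=
    sum_le_sum fun i _ => by
      rw [← sum_mul]; exact mul_le_of_le_one_left (by positivity) (hrow i)
  have hcol' : ∑ i, ∑ j, ‖S i j‖ * ‖x j‖ ^ 2 ≤ ∑ j, ‖x j‖ ^ 2 := by
    rw [sum_comm]
    exact sum_le_sum fun j _ => by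
      rw [← sum_mul]; exact mul_le_of_le_one_left (by positivity) (hcol j)
  calc ‖star x ⬝ᵥ S *ᵥ x‖ ≤ ∑ i, ∑ j, ‖S i j‖ * ((‖x i‖ ^ 2 + ‖x j‖ ^ 2) / 2) := by
        simp only [dotProduct, mulVec, mul_sum]
        refine (norm_sum_le _ _).trans (sum_le_sum fun i _ =>
          (norm_sum_le _ _).trans (sum_le_sum fun j _ => ?_))
        rw [norm_mul, norm_mul, Pi.star_apply, norm_star]
        nlinarith [sq_nonneg (‖x i‖ - ‖x j‖), norm_nonneg (S i j)]
    _ = (∑ i, ∑ j, ‖S i j‖ * ‖x i‖ ^ 2 + ∑ i, ∑ j, ‖S i j‖ * ‖x j‖ ^ 2) / 2 := by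
        simp only [← sum_add_distrib, sum_div]
        exact sum_congr rfl fun i _ => sum_congr rfl fun j _ => by ring
    _ ≤ ∑ i, ‖x i‖ ^ 2 := by linarith

theorem numericalRadiusLeOne_diagonal [DecidableEq n] {d : n → ℂ} (hd : ∀ i, ‖d i‖ ≤ 1) :
    NumericalRadiusLeOne (diagonal d) :=
  numericalRadiusLeOne_of_sum_norm_le_one
    (fun i => by simpa [diagonal_apply, apply_ite] using hd i)
    (fun j => by simpa [diagonal_apply, apply_ite] using hd j)

namespace NumericalRadiusLeOne

variable {S : Matrix n n ℂ}

theorem norm_apply_self_le [DecidableEq n] (hS : NumericalRadiusLeOne S) (i : n) :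
    ‖S i i‖ ≤ 1 := by
  simpa [Pi.single_apply, apply_ite] using hS (Pi.single i 1)

theorem star_mul_mul [DecidableEq n] (hS : NumericalRadiusLeOne S) {U : Matrix n n ℂ}
    (hU : U ∈ unitary (Matrix n n ℂ)) :
    NumericalRadiusLeOne (star U * S * U) := by
  intro x
  have hUx : star (U *ᵥ x) ⬝ᵥ U *ᵥ x = star x ⬝ᵥ x := by
    rw [star_mulVec, ← dotProduct_mulVec, mulVec_mulVec, ← star_eq_conjTranspose,
      Unitary.star_mul_self_of_mem hU, one_mulVec]
  have hquad : star x ⬝ᵥ (star U * S * U) *ᵥ x = star (U *ᵥ x) ⬝ᵥ S *ᵥ (U *ᵥ x) := by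
    rw [star_mulVec, ← dotProduct_mulVec, ← star_eq_conjTranspose, mulVec_mulVec, mulVec_mulVec,
      Matrix.mul_assoc]
  rw [star_dotProduct_self_eq_sum_norm_sq, star_dotProduct_self_eq_sum_norm_sq] at hUx
  rw [hquad, ← Complex.ofReal_injective hUx]
  exact hS _

theorem submatrix_equiv (hS : NumericalRadiusLeOne S) (e : m ≃ n) :
    NumericalRadiusLeOne (S.submatrix e e) := by
  intro x
  have hquad : star x ⬝ᵥ S.submatrix e e *ᵥ x = star (x ∘ e.symm) ⬝ᵥ S *ᵥ (x ∘ e.symm) := by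
    rw [submatrix_mulVec_equiv, ← comp_equiv_symm_dotProduct]
    rfl
  rw [hquad, ← e.symm.sum_comp (fun i => ‖x i‖ ^ 2)]
  exact hS _

theorem fromBlocks_zero {T : Matrix m m ℂ} (hS : NumericalRadiusLeOne S)
    (hT : NumericalRadiusLeOne T) :
    NumericalRadiusLeOne (fromBlocks S 0 0 T) := by
  intro x
  have hsplit : star x ⬝ᵥ fromBlocks S 0 0 T *ᵥ x =
      star (x ∘ Sum.inl) ⬝ᵥ S *ᵥ (x ∘ Sum.inl) + star (x ∘ Sum.inr) ⬝ᵥ T *ᵥ (x ∘ Sum.inr) := by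
    rw [← Sum.elim_comp_inl_inr x, fromBlocks_mulVec]
    simp [dotProduct, Fintype.sum_sum_type]
  rw [hsplit, Fintype.sum_sum_type]
  exact (norm_add_le _ _).trans (add_le_add (hS _) (hT _))

end NumericalRadiusLeOne

namespace IsHermitian

variable [DecidableEq n] {A S : Matrix n n ℂ}

theorem norm_trace_mul_le (hA : A.IsHermitian) (hS : NumericalRadiusLeOne S) :
    ‖(A * S).trace‖ ≤ ∑ i, |hA.eigenvalues i| := by
  set U : Matrix n n ℂ := (hA.eigenvectorUnitary : Matrix n n ℂ)
  set T := star U * S * U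
  set D : Matrix n n ℂ := diagonal (RCLike.ofReal ∘ hA.eigenvalues)
  have hspec : A = U * D * star U := hA.spectral_theorem
  have htrace : (A * S).trace = ∑ i, (hA.eigenvalues i : ℂ) * T i i := by
    calc (A * S).trace = (U * D * star U * S).trace := by rw [← hspec]
      _ = (D * T).trace := by
          rw [Matrix.mul_assoc, Matrix.mul_assoc, trace_mul_comm, Matrix.mul_assoc]
      _ = _ := by simp [D, trace, diagonal_mul]
  have hT : NumericalRadiusLeOne T := hS.star_mul_mul hA.eigenvectorUnitary.prop
  rw [htrace]
  refine (norm_sum_le _ _).trans (sum_le_sum fun i _ => ?_)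
  rw [norm_mul, Complex.norm_real, Real.norm_eq_abs]
  exact mul_le_of_le_one_right (abs_nonneg _) (hT.norm_apply_self_le i)

noncomputable def signMatrix (hA : A.IsHermitian) : Matrix n n ℂ :=
  (hA.eigenvectorUnitary : Matrix n n ℂ) *
    diagonal (fun i => ((SignType.sign (hA.eigenvalues i) : ℝ) : ℂ)) *
    star (hA.eigenvectorUnitary : Matrix n n ℂ)

theorem numericalRadiusLeOne_signMatrix (hA : A.IsHermitian) :
    NumericalRadiusLeOne hA.signMatrix := by
  have hU := Unitary.star_mem hA.eigenvectorUnitary.prop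
  have hD := numericalRadiusLeOne_diagonal (n := n)
    (d := fun i => ((SignType.sign (hA.eigenvalues i) : ℝ) : ℂ)) fun i => by
      rcases SignType.sign (hA.eigenvalues i) with _ | _ | _ <;> simp
  simpa [signMatrix] using hD.star_mul_mul hU

theorem trace_mul_signMatrix (hA : A.IsHermitian) :
    (A * hA.signMatrix).trace = ((∑ i, |hA.eigenvalues i| : ℝ) : ℂ) := by
  set U : Matrix n n ℂ := (hA.eigenvectorUnitary : Matrix n n ℂ)
  set D : Matrix n n ℂ := diagonal (RCLike.ofReal ∘ hA.eigenvalues)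
  set E := diagonal (fun i => ((SignType.sign (hA.eigenvalues i) : ℝ) : ℂ))
  have hspec : A = U * D * star U := hA.spectral_theorem
  have hUU : star U * U = 1 := Unitary.coe_star_mul_self _
  calc (A * hA.signMatrix).trace = (U * D * star U * (U * E * star U)).trace := by
        rw [← hspec]; rfl
    _ = (U * (D * E * star U)).trace := by
        congr 1
        calc _ = U * (D * (star U * U) * E * star U) := by simp only [Matrix.mul_assoc]
          _ = _ := by rw [hUU, Matrix.mul_one]
    _ = (D * E * star U * U).trace := trace_mul_comm _ _
    _ = _ := by
        rw [Matrix.mul_assoc (D * E), hUU, Matrix.mul_one, diagonal_mul_diagonal, trace_diagonal]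
        simp [← Complex.ofReal_mul, self_mul_sign]

theorem sum_abs_eigenvalues_submatrix_inl_add_inr_le [DecidableEq m] [DecidableEq ι]
    {A : Matrix ι ι ℂ} (hA : A.IsHermitian) (e : m ⊕ n ≃ ι) :
    ∑ i, |(hA.submatrix (e ∘ Sum.inl)).eigenvalues i| +
        ∑ i, |(hA.submatrix (e ∘ Sum.inr)).eigenvalues i| ≤ ∑ i, |hA.eigenvalues i| := by
  set h₁ := hA.submatrix (e ∘ Sum.inl)
  set h₂ := hA.submatrix (e ∘ Sum.inr)
  set S := (Matrix.fromBlocks h₁.signMatrix 0 0 h₂.signMatrix).submatrix e.symm e.symm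
  have hS : NumericalRadiusLeOne S :=
    (h₁.numericalRadiusLeOne_signMatrix.fromBlocks_zero
      h₂.numericalRadiusLeOne_signMatrix).submatrix_equiv e.symm
  have htrace : (A * S).trace =
      (A.submatrix (e ∘ Sum.inl) (e ∘ Sum.inl) * h₁.signMatrix).trace +
        (A.submatrix (e ∘ Sum.inr) (e ∘ Sum.inr) * h₂.signMatrix).trace := by
    have hblocks : A.submatrix e e =
        Matrix.fromBlocks (A.submatrix (e ∘ Sum.inl) (e ∘ Sum.inl))
          (A.submatrix (e ∘ Sum.inl) (e ∘ Sum.inr)) (A.submatrix (e ∘ Sum.inr) (e ∘ Sum.inl))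
          (A.submatrix (e ∘ Sum.inr) (e ∘ Sum.inr)) :=
      (fromBlocks_toBlocks _).symm
    calc (A * S).trace = (A.submatrix e e * S.submatrix e e).trace := by
          rw [submatrix_mul_equiv, trace, trace, ← e.sum_comp]
          rfl
      _ = _ := by
          simp only [hblocks, S, submatrix_submatrix, e.symm_comp_self, submatrix_id_id,
            fromBlocks_multiply]
          simp [trace, Fintype.sum_sum_type]
  have h := hA.norm_trace_mul_le hS
  rwa [htrace, trace_mul_signMatrix, trace_mul_signMatrix, ← Complex.ofReal_add, Complex.norm_real,
    Real.norm_of_nonneg (by positivity)] at h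

end IsHermitian
end Matrix

section GainGraph

variable {G : SimpleGraph V} {φ : V → V → ℂ}

theorem IsGain.mul_swap_eq_one (hg : IsGain G φ) {u v : V} (h : G.Adj u v) :
    φ u v * φ v u = 1 := by
  rw [hg.inv u v h, mul_inv_cancel₀]
  exact norm_ne_zero_iff.mp (by rw [hg.unit u v h]; exact one_ne_zero)

theorem IsGain.norm_gainAdj_le (hg : IsGain G φ) (u v : V) : ‖gainAdj G φ u v‖ ≤ 1 := by
  unfold gainAdj
  split_ifs with h
  · exact (hg.unit u v h).le
  · simp

theorem gainEnergy_induce_add_gainEnergy_induce_compl_le [Fintype V] [DecidableEq V]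
    (hg : IsGain G φ) (s : Set V) [Fintype s] [Fintype ↥sᶜ] :
    gainEnergy (G.induce s) (fun a b => φ a b) (hg.induce s) +
        gainEnergy (G.induce sᶜ) (fun a b => φ a b) (hg.induce sᶜ) ≤ gainEnergy G φ hg := by
  let := Classical.decPred (· ∈ s)
  exact hg.isHermitian.sum_abs_eigenvalues_submatrix_inl_add_inr_le (Equiv.Set.sumCompl s)

namespace IsGraphMatching

variable {M : Finset (Sym2 V)}

theorem eq_of_mk_mem (hM : IsGraphMatching G M) {u v w : V} (hv : s(u, v) ∈ M)
    (hw : s(u, w) ∈ M) : v = w := by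
  by_contra hne
  exact hM.2 _ hv _ hw (fun h => hne (Sym2.congr_right.mp h)) u (Sym2.mem_mk_left _ _)
    (Sym2.mem_mk_left _ _)

variable [Fintype V] [DecidableEq V]

theorem card_filter_mk_mem_le_one (hM : IsGraphMatching G M) (u : V) :
    #{v | s(u, v) ∈ M} ≤ 1 :=
  card_le_one.mpr fun _ hv _ hw =>
    hM.eq_of_mk_mem (mem_filter.mp hv).2 (mem_filter.mp hw).2

theorem two_mul_card (hM : IsGraphMatching G M) :
    2 * #M = #{p : V × V | s(p.1, p.2) ∈ M} := by
  classical
  convert (SimpleGraph.fromEdgeSet (M : Set (Sym2 V))).two_mul_card_edgeFinset using 3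
  · ext e
    simp only [SimpleGraph.mem_edgeFinset, SimpleGraph.edgeSet_fromEdgeSet, Set.mem_sdiff,
      mem_coe, iff_self_and]
    exact fun he => G.not_isDiag_of_mem_edgeSet (hM.1 he)
  · simp only [SimpleGraph.fromEdgeSet_adj, mem_coe, iff_self_and]
    exact fun h => (hM.1 h).ne

theorem numericalRadiusLeOne (hM : IsGraphMatching G M) {A : Matrix V V ℂ}
    (hA : ∀ u v, ‖A u v‖ ≤ 1) :
    NumericalRadiusLeOne (of fun u v => if s(u, v) ∈ M then A u v else 0) := by
  have hentry : ∀ u v, ‖if s(u, v) ∈ M then A u v else 0‖ ≤ if s(u, v) ∈ M then 1 else 0 := by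
    intro u v
    split_ifs <;> simp [hA]
  have hcount : ∀ u, ∑ v, (if s(u, v) ∈ M then (1 : ℝ) else 0) ≤ 1 := fun u => by
    rw [sum_boole]
    exact_mod_cast hM.card_filter_mk_mem_le_one u
  refine numericalRadiusLeOne_of_sum_norm_le_one (fun u => ?_) fun v => ?_
  · exact (sum_le_sum fun v _ => hentry u v).trans (hcount u)
  · refine (sum_le_sum fun u _ => (hentry u v).trans_eq ?_).trans (hcount v)
    rw [Sym2.eq_swap]

theorem trace_gainAdj_mul (hM : IsGraphMatching G M) (hg : IsGain G φ) :
    (gainAdj G φ * of fun u v => if s(u, v) ∈ M then gainAdj G φ u v else 0).trace =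
      2 * #M := by
  have hentry : ∀ u v, gainAdj G φ u v * (if s(v, u) ∈ M then gainAdj G φ v u else 0) =
      if s(u, v) ∈ M then 1 else 0 := by
    intro u v
    rw [Sym2.eq_swap]
    split_ifs with h
    · have hadj : G.Adj u v := hM.1 h
      simp only [gainAdj, if_pos hadj, if_pos hadj.symm]
      exact hg.mul_swap_eq_one hadj
    · exact mul_zero _
  calc _ = ∑ u, ∑ v, gainAdj G φ u v * (if s(v, u) ∈ M then gainAdj G φ v u else 0) := by
        simp only [trace, diag_apply, mul_apply, of_apply]
    _ = #{p : V × V | s(p.1, p.2) ∈ M} := by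
        simp only [hentry]
        rw [← Fintype.sum_prod_type', sum_boole]
    _ = 2 * #M := by rw [← hM.two_mul_card]; push_cast; rfl

theorem two_mul_card_le_gainEnergy (hM : IsGraphMatching G M) (hg : IsGain G φ) :
    2 * (#M : ℝ) ≤ gainEnergy G φ hg := by
  have h := hg.isHermitian.norm_trace_mul_le (hM.numericalRadiusLeOne hg.norm_gainAdj_le)
  rw [hM.trace_gainAdj_mul hg] at h
  exact_mod_cast h

end IsGraphMatching

theorem exists_isGraphMatching_card_eq_matchingNumber [Fintype V] (G : SimpleGraph V) :
    ∃ M : Finset (Sym2 V), IsGraphMatching G M ∧ #M = matchingNumber G := by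
  have hne : {n | ∃ M : Finset (Sym2 V), IsGraphMatching G M ∧ #M = n}.Nonempty :=
    ⟨0, ∅, ⟨by simp, by simp⟩, rfl⟩
  have hbdd : BddAbove {n | ∃ M : Finset (Sym2 V), IsGraphMatching G M ∧ #M = n} :=
    ⟨Fintype.card (Sym2 V), fun _ ⟨M, _, hM⟩ => hM ▸ card_le_univ M⟩
  exact Nat.sSup_mem hne hbdd

theorem two_mul_matchingNumber_le_gainEnergy [Fintype V] [DecidableEq V] (hg : IsGain G φ) :
    2 * (matchingNumber G : ℝ) ≤ gainEnergy G φ hg := by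
  obtain ⟨M, hM, hcard⟩ := exists_isGraphMatching_card_eq_matchingNumber G
  rw [← hcard]
  exact hM.two_mul_card_le_gainEnergy hg

end GainGraph

/-- if `G₁` is an induced subgraph (on vertex set `U`) with
`μ(G) = μ(G₁) + μ(G − G₁)` and the energy of `Φ` equals `2μ(G)`, then the energy of the
restriction of `Φ` to `G₁` equals `2μ(G₁)`. -/
theorem gainEnergy_induce_eq [Fintype V] [DecidableEq V]
    (G : SimpleGraph V) (φ : V → V → ℂ) (hg : IsGain G φ) (U : Finset V)
    (hμ : matchingNumber G =
      matchingNumber (G.induce (U : Set V)) + matchingNumber (G.induce ((Uᶜ : Finset V) : Set V)))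
    (hE : gainEnergy G φ hg = 2 * (matchingNumber G : ℝ)) :
    gainEnergy (G.induce (U : Set V)) (fun a b => φ a b) (hg.induce (U : Set V)) =
      2 * (matchingNumber (G.induce (U : Set V)) : ℝ) := by
  rw [Finset.coe_compl] at hμ
  have hμ' : (matchingNumber G : ℝ) = matchingNumber (G.induce (U : Set V)) +
      matchingNumber (G.induce (U : Set V)ᶜ) := by exact_mod_cast hμ
  have hpinch := gainEnergy_induce_add_gainEnergy_induce_compl_le hg (U : Set V)
  have h₁ := two_mul_matchingNumber_le_gainEnergy (hg.induce (U : Set V))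
  have h₂ := two_mul_matchingNumber_le_gainEnergy (hg.induce (U : Set V)ᶜ)
  linarith
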